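/- Let X, Y be invertible symmetric 3×3 matrices over GF(2), both different from 𝟙. Then B₀(α(X + 𝟙), α(Y + 𝟙)) = det(X + Y) + det(X + 𝟙) + det(Y + 𝟙). In particular: (a) if det(X+𝟙) = det(Y+𝟙) = 1 then B₀(α(X+𝟙), α(Y+𝟙)) = 0 iff det(X+Y) = 0; (b) if det(X+𝟙) = det(Y+𝟙) = 0 then B₀(α(X+𝟙), α(Y+𝟙)) = 0 iff det(X+Y) = 0; (c) if det(X+𝟙) ≠ det(Y+𝟙) then B₀(α(X+𝟙), α(Y+𝟙)) = 0 iff det(X+Y) = 1. -/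

import Mathlib

open Matrix

/-- The coordinate map `α`. -/
def alphaMap (X : Matrix (Fin 3) (Fin 3) (ZMod 2)) : Fin 6 → ZMod 2 :=
  ![X 0 0, X 1 2 + X 1 1 * X 2 2, X 1 1, X 0 2 + X 0 0 * X 2 2, X 2 2,
    X 0 1 + X 0 0 * X 1 1]

/-- The quadratic form `q₀(x) = x₁x₂ + x₃x₄ + x₅x₆` on GF(2)^6. -/
def q0 (x : Fin 6 → ZMod 2) : ZMod 2 := x 0 * x 1 + x 2 * x 3 + x 4 * x 5

/-- The polar form of `q₀`. -/
def B0 (x y : Fin 6 → ZMod 2) : ZMod 2 := q0 (x + y) + q0 x + q0 y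

theorem Matrix.IsSymm.det_fin_three_of_charTwo {R : Type*} [CommRing R] [CharP R 2]
    {M : Matrix (Fin 3) (Fin 3) R} (hM : M.IsSymm) :
    M.det = M 0 0 * M 1 1 * M 2 2 + M 0 0 * M 1 2 ^ 2 + M 1 1 * M 0 2 ^ 2 +
      M 2 2 * M 0 1 ^ 2 := by
  rw [det_fin_three, hM.apply 0 1, hM.apply 0 2, hM.apply 1 2]
  linear_combination (M 0 1 * M 0 2 * M 1 2 - M 0 0 * M 1 2 ^ 2 - M 1 1 * M 0 2 ^ 2 -
    M 2 2 * M 0 1 ^ 2) * CharTwo.two_eq_zero (R := R)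

theorem Matrix.IsSymm.det_fin_three_zmod_two {M : Matrix (Fin 3) (Fin 3) (ZMod 2)}
    (hM : M.IsSymm) :
    M.det = M 0 0 * M 1 1 * M 2 2 + M 0 0 * M 1 2 + M 1 1 * M 0 2 + M 2 2 * M 0 1 := by
  simp only [hM.det_fin_three_of_charTwo, ZMod.pow_card]

theorem B0_apply (x y : Fin 6 → ZMod 2) :
    B0 x y = x 0 * y 1 + x 1 * y 0 + x 2 * y 3 + x 3 * y 2 + x 4 * y 5 + x 5 * y 4 := by
  simp only [B0, q0, Pi.add_apply]
  linear_combination (x 0 * x 1 + x 2 * x 3 + x 4 * x 5 + y 0 * y 1 + y 2 * y 3 + y 4 * y 5) *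
    CharTwo.two_eq_zero (R := ZMod 2)

theorem B0_alphaMap {U V : Matrix (Fin 3) (Fin 3) (ZMod 2)} (hU : U.IsSymm) (hV : V.IsSymm) :
    B0 (alphaMap U) (alphaMap V) = (U + V).det + U.det + V.det := by
  rw [(hU.add hV).det_fin_three_zmod_two, hU.det_fin_three_zmod_two,
    hV.det_fin_three_zmod_two, B0_apply]
  simp only [alphaMap, Matrix.add_apply, Matrix.cons_val]
  ring_nf
  reduce_mod_char

theorem ZMod.add_eq_one_of_ne {a b : ZMod 2} (h : a ≠ b) : a + b = 1 := by
  revert a b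
  decide

theorem collinearity_criterion_general (X Y : Matrix (Fin 3) (Fin 3) (ZMod 2))
    (hX : X = Xᵀ) (hY : Y = Yᵀ) :
    B0 (alphaMap (X + 1)) (alphaMap (Y + 1)) = (X + Y).det + (X + 1).det + (Y + 1).det ∧
    ((X + 1).det = 1 → (Y + 1).det = 1 →
      (B0 (alphaMap (X + 1)) (alphaMap (Y + 1)) = 0 ↔ (X + Y).det = 0)) ∧
    ((X + 1).det = 0 → (Y + 1).det = 0 →
      (B0 (alphaMap (X + 1)) (alphaMap (Y + 1)) = 0 ↔ (X + Y).det = 0)) ∧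
    ((X + 1).det ≠ (Y + 1).det →
      (B0 (alphaMap (X + 1)) (alphaMap (Y + 1)) = 0 ↔ (X + Y).det = 1)) := by
  have hB0 := B0_alphaMap (IsSymm.add hX.symm isSymm_one) (IsSymm.add hY.symm isSymm_one)
  rw [add_add_add_comm, CharTwo.add_self_eq_zero, add_zero] at hB0
  have collinear_iff :
      B0 (alphaMap (X + 1)) (alphaMap (Y + 1)) = 0 ↔ (X + Y).det = (X + 1).det + (Y + 1).det := by
    rw [hB0, add_assoc, CharTwo.add_eq_zero]
  refine ⟨hB0, fun hX1 hY1 => ?_, fun hX1 hY1 => ?_, fun hne => ?_⟩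
  · rw [collinear_iff, hX1, hY1, CharTwo.add_self_eq_zero]
  · rw [collinear_iff, hX1, hY1, add_zero]
  · rw [collinear_iff, ZMod.add_eq_one_of_ne hne]

/-- Collinearity in `GQ(𝐒)`: for invertible symmetric `X, Y ≠ 1`,
`B₀(α(X+1), α(Y+1)) = det(X+Y) + det(X+1) + det(Y+1)`, with the three special cases
(a), (b), (c). -/
theorem collinearity_criterion (X Y : Matrix (Fin 3) (Fin 3) (ZMod 2))
    (hX : X = Xᵀ) (hXdet : X.det = 1) (hX1 : X ≠ 1)
    (hY : Y = Yᵀ) (hYdet : Y.det = 1) (hY1 : Y ≠ 1) :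
    B0 (alphaMap (X + 1)) (alphaMap (Y + 1)) = (X + Y).det + (X + 1).det + (Y + 1).det ∧
    ((X + 1).det = 1 → (Y + 1).det = 1 →
      (B0 (alphaMap (X + 1)) (alphaMap (Y + 1)) = 0 ↔ (X + Y).det = 0)) ∧
    ((X + 1).det = 0 → (Y + 1).det = 0 →
      (B0 (alphaMap (X + 1)) (alphaMap (Y + 1)) = 0 ↔ (X + Y).det = 0)) ∧
    ((X + 1).det ≠ (Y + 1).det →
      (B0 (alphaMap (X + 1)) (alphaMap (Y + 1)) = 0 ↔ (X + Y).det = 1)) :=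
  collinearity_criterion_general X Y hX hY
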